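/- Under the assumptions that D ⊆ ∂O is closed and Ahlfors–David regular and that O is locally uniform near ∂O \ D, the full boundary ∂O is porous. -/

import Mathlib

open MeasureTheory

/-- A set `E ⊆ ℝ^d` is porous if there exists `κ ∈ (0,1]` such that for all `x ∈ E` and
all radii `r ≤ 1` there exists `z ∈ B(x,r)` with `B(z, κr) ⊆ B(x,r) \ E`. -/
def Porous {d : ℕ} (E : Set (EuclideanSpace ℝ (Fin d))) : Prop :=
  ∃ κ : ℝ, 0 < κ ∧ κ ≤ 1 ∧ ∀ x ∈ E, ∀ r : ℝ, 0 < r → r ≤ 1 →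
    ∃ z ∈ Metric.ball x r, Metric.ball z (κ * r) ⊆ Metric.ball x r \ E

/-- The open `δ`-neighborhood of a set `N`. -/
def Nbhd {d : ℕ} (N : Set (EuclideanSpace ℝ (Fin d))) (δ : ℝ) :
    Set (EuclideanSpace ℝ (Fin d)) :=
  {z | ∃ y ∈ N, dist z y < δ}

/-- `O` is locally an `(ε,δ)`-domain near `N ⊆ ∂O`: cigar-connectivity in `O ∩ N_δ`
with respect to `∂O ∩ N_δ`, plus positive radius of components meeting `N`. -/
def LocallyEpsDeltaDomain {d : ℕ} (O N : Set (EuclideanSpace ℝ (Fin d)))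
    (ε δ : ℝ) : Prop :=
  (∀ x ∈ O ∩ Nbhd N δ, ∀ y ∈ O ∩ Nbhd N δ, x ≠ y → dist x y < δ →
    ∃ γ : ℝ → EuclideanSpace ℝ (Fin d),
      ContinuousOn γ (Set.Icc 0 1) ∧ γ 0 = x ∧ γ 1 = y ∧
      Set.MapsTo γ (Set.Icc 0 1) O ∧
      eVariationOn γ (Set.Icc 0 1) ≤ ENNReal.ofReal (ε⁻¹ * dist x y) ∧
      ∀ s ∈ Set.Icc (0:ℝ) 1, ∀ w ∈ frontier O ∩ Nbhd N δ,
        ε * dist (γ s) x * dist (γ s) y / dist x y ≤ dist (γ s) w) ∧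
  ∃ c : ℝ, 0 < c ∧ ∀ x ∈ O, (frontier (connectedComponentIn O x) ∩ N).Nonempty →
    ENNReal.ofReal c ≤ EMetric.diam (connectedComponentIn O x)

open Metric Set

/-!
Near a point `p ∈ D`, Ahlfors–David regularity yields a ball `B(z, κr) ⊆ B(p, r)` missing `D`:
otherwise the `3κr`-balls around a maximal `2κr`-separated subset of `D ∩ B(p, r/4)` would
cover `B(p, r/8)`, so that subset would have `≳ κ^{-d}` points, while the disjoint pieces
`D ∩ B(f, κr)`, each of `H^{d-1}`-measure `≳ (κr)^{d-1}`, fit into `D ∩ B(p, r/2)`, allowing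
only `≲ κ^{1-d}` of them. Inside such a ball `∂O` either is absent or meets only `∂O \ D`, and
near `∂O \ D` local uniformity gives a corkscrew: the component of `O` at a point `a` close to
the boundary is large (its boundary reaches `∂O \ D`), so it contains a point `y` at distance
comparable to the scale, and the midpoint of the cigar from `a` to `y` stays that far from `∂O`.
-/

def HasHole {X : Type*} [PseudoMetricSpace X] (E : Set X) (x : X) (r κ : ℝ) : Prop :=
  ∃ z ∈ ball x r, ball z (κ * r) ⊆ ball x r \ E

section HasHole

variable {X : Type*} [PseudoMetricSpace X] {E E' : Set X} {x y : X} {r ρ κ κ' : ℝ}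

lemma HasHole.anti (h : HasHole E x r κ) (hE : E' ⊆ E) : HasHole E' x r κ :=
  let ⟨z, hz, hzE⟩ := h
  ⟨z, hz, hzE.trans (sdiff_subset_sdiff_right hE)⟩

lemma HasHole.of_ball_subset (h : HasHole E y ρ κ) (hball : ball y ρ ⊆ ball x r)
    (hκ : κ' * r ≤ κ * ρ) : HasHole E x r κ' :=
  let ⟨z, hz, hzE⟩ := h
  ⟨z, hball hz, (ball_subset_ball hκ).trans (hzE.trans (sdiff_subset_sdiff_left hball))⟩

lemma hasHole_one_of_disjoint (hr : 0 < r) (h : Disjoint (ball x r) E) : HasHole E x r 1 :=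
  ⟨x, mem_ball_self hr, by rw [one_mul]; exact subset_sdiff.2 ⟨subset_rfl, h⟩⟩

end HasHole

lemma frontier_connectedComponentIn_subset {X : Type*} [TopologicalSpace X]
    [LocallyConnectedSpace X] {O : Set X} (hO : IsOpen O) (a : X) :
    frontier (connectedComponentIn O a) ⊆ frontier O := by
  intro w hw
  rw [hO.frontier_eq]
  refine ⟨closure_mono (connectedComponentIn_subset O a) hw.1, fun hwO => hw.2 ?_⟩
  obtain ⟨y, hyw, hya⟩ := mem_closure_iff_nhds.1 hw.1 _
    (connectedComponentIn_mem_nhds (hO.mem_nhds hwO))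
  rw [hO.connectedComponentIn.interior_eq, connectedComponentIn_eq hya,
    ← connectedComponentIn_eq hyw]
  exact mem_connectedComponentIn hwO

lemma IsPreconnected.exists_dist_eq {X : Type*} [PseudoMetricSpace X] {U : Set X}
    (hU : IsPreconnected U) {a b : X} (ha : a ∈ U) (hb : b ∈ U) {L : ℝ} (hL0 : 0 ≤ L)
    (hL : L ≤ dist a b) : ∃ y ∈ U, dist a y = L := by
  simpa using hU.intermediate_value ha hb (continuous_const.dist continuous_id).continuousOn
    ⟨by simpa using hL0, hL⟩

lemma exists_mem_connectedComponentIn_le_dist {X : Type*} [PseudoMetricSpace X]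
    [LocallyConnectedSpace X] [PreconnectedSpace X] {O N : Set X} {c ρ : ℝ}
    (hO : IsOpen O) (hO_ne : O ≠ univ)
    (hc : ∀ x ∈ O, (frontier (connectedComponentIn O x) ∩ N).Nonempty →
      ENNReal.ofReal c ≤ ediam (connectedComponentIn O x))
    {a : X} (ha : a ∈ O) (hρc : 2 * ρ < c) (hN : frontier O ∩ closedBall a ρ ⊆ N) :
    ∃ b ∈ connectedComponentIn O a, ρ ≤ dist a b := by
  by_contra! hU
  have hρ : 0 < ρ := by simpa using hU a (mem_connectedComponentIn ha)
  have hUa : connectedComponentIn O a ⊆ closedBall a ρ := fun b hb => by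
    rw [mem_closedBall, dist_comm]; exact (hU b hb).le
  obtain ⟨w, hw⟩ := nonempty_frontier_iff.2 ⟨⟨a, mem_connectedComponentIn ha⟩,
    fun h => hO_ne (eq_univ_of_univ_subset (h ▸ connectedComponentIn_subset O a))⟩
  have hwN : w ∈ N := hN ⟨frontier_connectedComponentIn_subset hO a hw,
    isClosed_closedBall.closure_subset_iff.2 hUa hw.1⟩
  have hdiam : ediam (connectedComponentIn O a) ≤ ENNReal.ofReal (2 * ρ) :=
    ediam_le_of_forall_dist_le fun u hu v hv => (dist_triangle_left u v a).trans
      (by linarith [(hU u hu).le, (hU v hv).le])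
  have := (hc a ha ⟨w, hw, hwN⟩).trans hdiam
  rw [ENNReal.ofReal_le_ofReal_iff (by positivity)] at this
  linarith

lemma LocallyEpsDeltaDomain.exists_far_from_frontier {d : ℕ}
    {O N : Set (EuclideanSpace ℝ (Fin d))} {ε δ : ℝ} (h : LocallyEpsDeltaDomain O N ε δ)
    (hε : 0 ≤ ε) {x y : EuclideanSpace ℝ (Fin d)} (hx : x ∈ O ∩ Nbhd N δ)
    (hy : y ∈ O ∩ Nbhd N δ) (hxy : x ≠ y) (hxyδ : dist x y < δ) :
    ∃ z, dist z x ≤ ε⁻¹ * dist x y ∧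
      ∀ w ∈ frontier O ∩ Nbhd N δ, ε * dist x y / 4 ≤ dist z w := by
  obtain ⟨γ, hγ, hγ0, hγ1, -, hvar, hcigar⟩ := h.1 x hx y hy hxy hxyδ
  obtain ⟨s, hs, hmid⟩ : ∃ s ∈ Icc (0 : ℝ) 1, dist (γ s) x - dist (γ s) y = 0 :=
    intermediate_value_Icc zero_le_one (by fun_prop) (by simp [hγ0, hγ1, dist_comm y x])
  have hhalf : dist x y / 2 ≤ dist (γ s) x := by linarith [dist_triangle_left x y (γ s)]
  refine ⟨γ s, ?_, fun w hw => ?_⟩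
  · have := (eVariationOn.edist_le γ hs (left_mem_Icc.2 zero_le_one)).trans hvar
    rwa [hγ0, edist_le_ofReal (by positivity)] at this
  · have hxy0 : 0 < dist x y := dist_pos.2 hxy
    calc ε * dist x y / 4 = ε * (dist x y / 2) * (dist x y / 2) / dist x y := by
          field_simp; ring
      _ ≤ ε * dist (γ s) x * dist (γ s) y / dist x y := by gcongr; linarith
      _ ≤ dist (γ s) w := hcigar s hs w hw

theorem LocallyEpsDeltaDomain.hasHole_frontier {d : ℕ} {O N : Set (EuclideanSpace ℝ (Fin d))}
    {ε δ : ℝ} (h : LocallyEpsDeltaDomain O N ε δ) (hO : IsOpen O) (hε : 0 < ε) (hε1 : ε ≤ 1)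
    (hδ : 0 < δ) :
    ∃ κ, 0 < κ ∧ κ ≤ 1 ∧ ∀ x ∈ frontier O, ∀ r, 0 < r → r ≤ 1 →
      frontier O ∩ ball x r ⊆ N → HasHole (frontier O) x r κ := by
  obtain ⟨c, hc, hcomp⟩ := h.2
  set m := min 1 (min δ c)
  have hm : 0 < m := by positivity
  have hm1 : m ≤ 1 := min_le_left _ _
  refine ⟨ε ^ 2 * m / 32, by positivity, by nlinarith, fun x hx r hr hr1 hN => ?_⟩
  set t := m * r
  have ht : 0 < t := by positivity
  have htr : t ≤ r := by nlinarith
  have htδ : t ≤ δ := by nlinarith [min_le_left δ c, min_le_right 1 (min δ c)]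
  have htc : t ≤ c := by nlinarith [min_le_right δ c, min_le_right 1 (min δ c)]
  have hεt : ε * t ≤ t := by nlinarith
  have hε2t : ε ^ 2 * t ≤ t := by nlinarith
  have hxN : x ∈ N := hN ⟨hx, mem_ball_self hr⟩
  -- `a ∈ O` near `x`, `y` in its component with `dist a y = ε t / 8`, and the midpoint `z` of
  -- the cigar from `a` to `y`, which lies `ε ^ 2 t / 32` away from `∂O`
  obtain ⟨a, haO, hxa⟩ :=
    Metric.mem_closure_iff.1 (frontier_subset_closure hx) (t / 8) (by positivity)
  have hO_ne : O ≠ univ := by rintro rfl; simp at hx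
  obtain ⟨b, hbU, hab⟩ := exists_mem_connectedComponentIn_le_dist hO hO_ne hcomp haO
    (ρ := t / 4) (by linarith) fun w hw => hN ⟨hw.1, by
      rw [mem_ball]; linarith [dist_triangle w a x, mem_closedBall.1 hw.2, dist_comm x a]⟩
  obtain ⟨y, hyU, hay⟩ := isPreconnected_connectedComponentIn.exists_dist_eq
    (mem_connectedComponentIn haO) hbU (L := ε * t / 8) (by positivity) (by linarith)
  have hyx : dist y x < δ := by linarith [dist_triangle y a x, dist_comm a y, dist_comm x a]
  obtain ⟨z, hza, hzfar⟩ := h.exists_far_from_frontier hε.le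
    ⟨haO, x, hxN, by rw [dist_comm]; linarith⟩ ⟨connectedComponentIn_subset O a hyU, x, hxN, hyx⟩
    (dist_pos.1 (by rw [hay]; positivity)) (by rw [hay]; nlinarith)
  rw [hay, show ε⁻¹ * (ε * t / 8) = t / 8 by field_simp] at hza
  rw [hay] at hzfar
  have hzx : dist z x < t / 4 := by linarith [dist_triangle z a x, dist_comm x a]
  refine ⟨z, mem_ball.2 (by linarith), fun w hw => ?_⟩
  have hwz : dist w z < ε ^ 2 * t / 32 := by rw [mem_ball] at hw; linarith
  have hwx : w ∈ ball x r := mem_ball.2 (by linarith [dist_triangle w z x])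
  refine ⟨hwx, fun hwO => ?_⟩
  have := hzfar w ⟨hwO, w, hN ⟨hwO, hwx⟩, by simpa using hδ⟩
  linarith [dist_comm z w]

def IsAhlforsDavidRegular {d : ℕ} (D : Set (EuclideanSpace ℝ (Fin d))) (c C : ℝ) : Prop :=
  ∀ x ∈ D, ∀ r : ℝ, 0 < r → ENNReal.ofReal r < ediam D →
    ENNReal.ofReal (c * r ^ (d - 1)) ≤ μH[((d : ℝ) - 1)] (D ∩ ball x r) ∧
    μH[((d : ℝ) - 1)] (D ∩ ball x r) ≤ ENNReal.ofReal (C * r ^ (d - 1))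

lemma hasHole_closedBall_half {E : Type*} [NormedAddCommGroup E] [NormedSpace ℝ E]
    [Nontrivial E] (p : E) {r κ : ℝ} (hr : 0 < r) (hκ : κ ≤ 1 / 4) :
    HasHole (closedBall p (r / 2)) p r κ := by
  obtain ⟨v, hv⟩ := exists_norm_eq E (by positivity : 0 ≤ 3 * r / 4)
  have hvp : dist (p + v) p = 3 * r / 4 := by rw [dist_self_add_left, hv]
  refine ⟨p + v, mem_ball.2 (by linarith), fun w hw => ?_⟩
  have hwv : dist w (p + v) < r / 4 := by rw [mem_ball] at hw; nlinarith
  refine ⟨mem_ball.2 (by linarith [dist_triangle w (p + v) p]), fun hwp => ?_⟩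
  linarith [dist_triangle_left (p + v) p w, mem_closedBall.1 hwp, dist_comm w p]

lemma TotallyBounded.exists_finset_separated_cover {X : Type*} [PseudoMetricSpace X]
    {A : Set X} (hA : TotallyBounded A) {s : ℝ} (hs : 0 < s) :
    ∃ F : Finset X, ↑F ⊆ A ∧ (F : Set X).Pairwise (fun u v => 2 * s < dist u v) ∧
      ∀ a ∈ A, ∃ f ∈ F, dist a f ≤ 2 * s := by
  lift s to NNReal using hs.le
  have hpack : packingNumber (2 * s) A ≠ ⊤ := by
    obtain ⟨N, -, hNfin, hN⟩ :=
      exists_finite_isCover_of_totallyBounded (NNReal.coe_pos.1 hs).ne' hA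
    exact ((packingNumber_two_mul_le_externalCoveringNumber s A).trans
      hN.externalCoveringNumber_le_encard).trans_lt hNfin.encard_lt_top |>.ne
  have hfin : (maximalSeparatedSet (2 * s) A).Finite := by
    rw [← encard_ne_top_iff, encard_maximalSeparatedSet hpack]; exact hpack
  refine ⟨hfin.toFinset, by simpa using maximalSeparatedSet_subset, fun u hu v hv huv => ?_,
    fun a ha => ?_⟩
  · have : ((2 * s : NNReal) : ENNReal) < edist u v :=
      isSeparated_maximalSeparatedSet (by simpa using hu) (by simpa using hv) huv
    rw [edist_nndist, ENNReal.coe_lt_coe, ← NNReal.coe_lt_coe, coe_nndist] at this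
    exact_mod_cast this
  · obtain ⟨f, hf, haf⟩ :=
      mem_iUnion₂.1 ((isCover_maximalSeparatedSet hpack).subset_iUnion_closedBall ha)
    exact ⟨f, by simpa using hf, by simpa using haf⟩

lemma sum_measure_inter_ball_le {X : Type*} [PseudoMetricSpace X] [MeasurableSpace X]
    [OpensMeasurableSpace X] (μ : Measure X) {D : Set X} (hD : MeasurableSet D) {F : Finset X}
    {s : ℝ} (hF : (F : Set X).Pairwise fun u v => 2 * s ≤ dist u v) {p : X} {R : ℝ}
    (hFp : ↑F ⊆ ball p R) :
    ∑ f ∈ F, μ (D ∩ ball f s) ≤ μ (D ∩ ball p (R + s)) := by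
  have hdisj : (F : Set X).PairwiseDisjoint fun f => D ∩ ball f s := fun u hu v hv huv =>
    (ball_disjoint_ball (by linarith [hF hu hv huv])).mono inter_subset_right inter_subset_right
  rw [← measure_biUnion_finset hdisj fun f _ => hD.inter measurableSet_ball]
  refine measure_mono (iUnion₂_subset fun f hf => inter_subset_inter_right D ?_)
  exact ball_subset_ball' (by linarith [mem_ball.1 (hFp hf)])

lemma pow_finrank_le_card_mul_pow {E : Type*} [NormedAddCommGroup E] [NormedSpace ℝ E]
    [MeasurableSpace E] [BorelSpace E] [FiniteDimensional ℝ E] {p : E} {ρ σ : ℝ}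
    (hρ : 0 ≤ ρ) (hσ : 0 ≤ σ) {F : Finset E} (hF : closedBall p ρ ⊆ ⋃ f ∈ F, closedBall f σ) :
    ρ ^ Module.finrank ℝ E ≤ F.card * σ ^ Module.finrank ℝ E := by
  let μ : Measure E := Measure.addHaar
  have := (measure_mono (μ := μ) hF).trans (measure_biUnion_finset_le F _)
  simp only [Measure.addHaar_closedBall μ _ hρ, Measure.addHaar_closedBall μ _ hσ,
    Finset.sum_const, nsmul_eq_mul, ← mul_assoc] at this
  rw [ENNReal.mul_le_mul_iff_left (measure_ball_pos μ 0 one_pos).ne' measure_ball_lt_top.ne,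
    ← ENNReal.ofReal_natCast, ← ENNReal.ofReal_mul (by positivity),
    ENNReal.ofReal_le_ofReal_iff (by positivity)] at this
  exact this

lemma mul_le_twelve_pow_mul_of_packing {d n : ℕ} {c C R s : ℝ} (hd : 0 < d) (hc : 0 < c)
    (hC : 0 ≤ C) (hR : 0 < R) (hs : 0 < s) (hvol : (R / 2) ^ d ≤ n * (3 * s) ^ d)
    (hμ : n * (c * s ^ (d - 1)) ≤ C * (2 * R) ^ (d - 1)) :
    c * R ≤ 12 ^ d * C * s := by
  obtain ⟨k, rfl⟩ := Nat.exists_eq_add_of_lt hd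
  simp only [zero_add, add_tsub_cancel_right] at hvol hμ ⊢
  have hsR : 0 < (s * R) ^ k := by positivity
  have key : c * R / 2 ^ (k + 1) * (s * R) ^ k ≤ 2 ^ k * 3 ^ (k + 1) * C * s * (s * R) ^ k :=
    calc c * R / 2 ^ (k + 1) * (s * R) ^ k = c * s ^ k * (R / 2) ^ (k + 1) := by
          rw [div_pow]; ring
      _ ≤ c * s ^ k * (n * (3 * s) ^ (k + 1)) := by gcongr
      _ = n * (c * s ^ k) * (3 * s) ^ (k + 1) := by ring
      _ ≤ C * (2 * R) ^ k * (3 * s) ^ (k + 1) := by gcongr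
      _ = 2 ^ k * 3 ^ (k + 1) * C * s * (s * R) ^ k := by ring
  have := le_of_mul_le_mul_right key hsR
  rw [div_le_iff₀ (by positivity)] at this
  calc c * R ≤ 2 ^ k * 3 ^ (k + 1) * C * s * 2 ^ (k + 1) := this
    _ = 6 * 12 ^ k * (C * s) := by
      rw [show (12 : ℝ) = 2 * 2 * 3 by norm_num, mul_pow, mul_pow]; ring
    _ ≤ 12 * 12 ^ k * (C * s) := by gcongr; norm_num
    _ = 12 ^ (k + 1) * C * s := by ring

theorem IsAhlforsDavidRegular.hasHole {d : ℕ} {D : Set (EuclideanSpace ℝ (Fin d))} {c C : ℝ}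
    (h : IsAhlforsDavidRegular D c C) (hd : 0 < d) (hD : IsClosed D) (hc : 0 < c)
    (hcC : c ≤ C) :
    ∃ κ, 0 < κ ∧ κ ≤ 1 ∧ ∀ p ∈ D, ∀ r, 0 < r → HasHole D p r κ := by
  have hC : 0 < C := hc.trans_le hcC
  have : Nonempty (Fin d) := ⟨⟨0, hd⟩⟩
  -- small enough to contradict the packing bound `c (r / 4) ≤ 12 ^ d C κ r`
  set κ := c / (8 * 12 ^ d * C)
  have hκ : 0 < κ := by positivity
  have hκ8 : κ ≤ 1 / 8 := by
    rw [div_le_iff₀ (by positivity)]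
    nlinarith [one_le_pow₀ (by norm_num : (1 : ℝ) ≤ 12) (n := d)]
  refine ⟨κ, hκ, by linarith, fun p hp r hr => ?_⟩
  by_cases hsmall : ediam D ≤ ENNReal.ofReal (r / 2)
  · refine (hasHole_closedBall_half p hr (by linarith)).anti fun y hy => mem_closedBall.2 ?_
    exact (edist_le_ofReal (by positivity)).1 ((edist_le_ediam_of_mem hy hp).trans hsmall)
  rw [not_le] at hsmall
  by_contra hhole
  set s := κ * r
  have hs : 0 < s := by positivity
  have hsr : s ≤ r / 8 := by nlinarith
  obtain ⟨F, hFA, hFsep, hFcov⟩ := ((isCompact_closedBall p (r / 4)).totallyBounded.subset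
    (inter_subset_right.trans ball_subset_closedBall)).exists_finset_separated_cover
    (A := D ∩ ball p (r / 4)) hs
  -- by `hhole`, `D` meets every `ball z s` with `z ∈ closedBall p (r / 8)`
  have hcover : closedBall p (r / 8) ⊆ ⋃ f ∈ F, closedBall f (3 * s) := by
    intro z hz
    rw [mem_closedBall] at hz
    obtain ⟨q, hqz, hqD⟩ : ∃ q ∈ ball z s, q ∈ D := by
      by_contra! hq
      exact hhole ⟨z, mem_ball.2 (by linarith), fun y hy =>
        ⟨mem_ball.2 (by linarith [dist_triangle y z p, mem_ball.1 hy]), hq y hy⟩⟩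
    rw [mem_ball] at hqz
    obtain ⟨f, hf, hqf⟩ :=
      hFcov q ⟨hqD, mem_ball.2 (by linarith [dist_triangle q z p, dist_comm q z])⟩
    exact mem_iUnion₂.2
      ⟨f, hf, mem_closedBall.2 (by linarith [dist_triangle z q f, dist_comm q z])⟩
  have hvol := pow_finrank_le_card_mul_pow (by positivity) (by positivity) hcover
  rw [finrank_euclideanSpace_fin] at hvol
  have hμ : (F.card : ℝ) * (c * s ^ (d - 1)) ≤ C * (2 * (r / 4)) ^ (d - 1) := by
    have hsum := (sum_measure_inter_ball_le (μH[((d : ℝ) - 1)]) hD.measurableSet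
      (hFsep.mono' fun _ _ h => h.le) (hFA.trans inter_subset_right)).trans
      (measure_mono (inter_subset_inter_right D (ball_subset_ball (by linarith :
        r / 4 + s ≤ 2 * (r / 4)))))
    have hlower : ∑ f ∈ F, ENNReal.ofReal (c * s ^ (d - 1)) ≤
        ∑ f ∈ F, μH[((d : ℝ) - 1)] (D ∩ ball f s) :=
      Finset.sum_le_sum fun f hf => (h f (hFA hf).1 s hs
        ((ENNReal.ofReal_le_ofReal (by linarith)).trans_lt hsmall)).1
    have hupper := (h p hp (2 * (r / 4)) (by positivity) (by convert hsmall using 2; ring)).2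
    have := (hlower.trans hsum).trans hupper
    rwa [Finset.sum_const, nsmul_eq_mul, ← ENNReal.ofReal_natCast, ← ENNReal.ofReal_mul
      (by positivity), ENNReal.ofReal_le_ofReal_iff (by positivity)] at this
  have := mul_le_twelve_pow_mul_of_packing hd hc hC.le (by positivity : 0 < r / 4) hs
    (by convert hvol using 2; ring) hμ
  have hκC : 12 ^ d * C * κ = c / 8 := by simp only [κ]; field_simp
  nlinarith

theorem porous_of_hasHole {d : ℕ} {E D : Set (EuclideanSpace ℝ (Fin d))} {κD κN : ℝ}
    (hκD : 0 < κD) (hκD1 : κD ≤ 1) (hκN : 0 < κN) (hκN1 : κN ≤ 1)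
    (hD : ∀ p ∈ D, ∀ r, 0 < r → r ≤ 1 → HasHole D p r κD)
    (hN : ∀ x ∈ E, ∀ r, 0 < r → r ≤ 1 → E ∩ ball x r ⊆ E \ D → HasHole E x r κN) :
    Porous E := by
  refine ⟨κN * κD / 4, by positivity, by nlinarith, fun x hx r hr hr1 => ?_⟩
  by_cases hfar : E ∩ ball x (r / 2) ⊆ E \ D
  · exact (hN x hx (r / 2) (by positivity) (by linarith) hfar).of_ball_subset
      (ball_subset_ball (by linarith)) (by nlinarith [mul_pos hκN hr])
  obtain ⟨p, ⟨hpE, hpx⟩, hpD⟩ := not_subset.1 hfar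
  have hpD : p ∈ D := by simpa [hpE] using hpD
  have hpr : ball p (r / 2) ⊆ ball x r := ball_subset_ball' (by rw [mem_ball] at hpx; linarith)
  obtain ⟨z, -, hzD⟩ := hD p hpD (r / 2) (by positivity) (by linarith)
  set ρ := κD * (r / 2) with hρ
  have hρ0 : 0 < ρ := by positivity
  have hzr : ball z ρ ⊆ ball x r := hzD.trans (sdiff_subset.trans hpr)
  by_cases hEz : Disjoint (ball z (ρ / 2)) E
  · exact (hasHole_one_of_disjoint (by positivity) hEz).of_ball_subset
      ((ball_subset_ball (by linarith)).trans hzr) (by nlinarith [mul_pos hκD hr])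
  -- a point of `E` close to `z` is far from `D`, so its hole comes from `hN`
  obtain ⟨q, hqz, hqE⟩ := not_disjoint_iff.1 hEz
  have hq : ball q (ρ / 2) ⊆ ball z ρ := ball_subset_ball' (by rw [mem_ball] at hqz; linarith)
  have hqD : E ∩ ball q (ρ / 2) ⊆ E \ D := fun w hw => ⟨hw.1, (hzD (hq hw.2)).2⟩
  exact (hN q hqE (ρ / 2) (half_pos hρ0) (by nlinarith) hqD).of_ball_subset (hq.trans hzr)
    (le_of_eq (by rw [hρ]; ring))

theorem frontier_porous_general {d : ℕ} (hd : 2 ≤ d) (O D : Set (EuclideanSpace ℝ (Fin d)))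
    (hO : IsOpen O) (hDclosed : IsClosed D)
    (c C : ℝ) (hc : 0 < c) (hcC : c ≤ C)
    (hADR : ∀ x ∈ D, ∀ r : ℝ, 0 < r → ENNReal.ofReal r < EMetric.diam D →
      ENNReal.ofReal (c * r ^ (d - 1)) ≤ μH[((d : ℝ) - 1)] (D ∩ Metric.ball x r) ∧
      μH[((d : ℝ) - 1)] (D ∩ Metric.ball x r) ≤ ENNReal.ofReal (C * r ^ (d - 1)))
    (ε δ : ℝ) (hε : 0 < ε) (hε1 : ε ≤ 1) (hδ : 0 < δ)
    (hloc : LocallyEpsDeltaDomain O (frontier O \ D) ε δ) :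
    Porous (frontier O) := by
  obtain ⟨κD, hκD, hκD1, hDhole⟩ :=
    IsAhlforsDavidRegular.hasHole hADR (by omega) hDclosed hc hcC
  obtain ⟨κN, hκN, hκN1, hNhole⟩ := hloc.hasHole_frontier hO hε hε1 hδ
  exact porous_of_hasHole hκD hκD1 hκN hκN1 (fun p hp r hr _ => hDhole p hp r hr) hNhole

/-- If `D ⊆ ∂O` is closed and Ahlfors–David regular and `O` is locally uniform near
`∂O \ D`, then the full boundary `∂O` is porous. -/
theorem frontier_porous {d : ℕ} (hd : 2 ≤ d) (O D : Set (EuclideanSpace ℝ (Fin d)))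
    (hO : IsOpen O) (hD : D ⊆ frontier O) (hDclosed : IsClosed D)
    (c C : ℝ) (hc : 0 < c) (hcC : c ≤ C)
    (hADR : ∀ x ∈ D, ∀ r : ℝ, 0 < r → ENNReal.ofReal r < EMetric.diam D →
      ENNReal.ofReal (c * r ^ (d - 1)) ≤ μH[((d : ℝ) - 1)] (D ∩ Metric.ball x r) ∧
      μH[((d : ℝ) - 1)] (D ∩ Metric.ball x r) ≤ ENNReal.ofReal (C * r ^ (d - 1)))
    (ε δ : ℝ) (hε : 0 < ε) (hε1 : ε ≤ 1) (hδ : 0 < δ)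
    (hloc : LocallyEpsDeltaDomain O (frontier O \ D) ε δ) :
    Porous (frontier O) :=
  frontier_porous_general hd O D hO hDclosed c C hc hcC hADR ε δ hε hε1 hδ hloc
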